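/- arXiv:2403.09184 — 2 statements merged into one kernel-verified Lean document; each statement's English description precedes it below -/
import Mathlib

section
/- Let {(R'_1,B'_1),…,(R'_m,B'_m)} ⊆ EC be a collection of the collapsed ECs that are maximal end components of M. Then no representative state s_{(R'_i,B'_i)} belongs to the state set R^c of any end component (R^c, B^c) of the collapsed MDP M^c. -/
/-!
Suppose the representative `s_i` of a MEC `(R_i, B_i)` lies in an EC `(R^c, B^c)` of `M^c`.
The states `s₊`, `s₋` are absorbing, so strong connectivity of `R^c` keeps them out of `R^c`;
as `rem_j`, `a₊`, `a₋` lead only to them, `B^c` consists of original actions. Replacing every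
representative `s_k ∈ R^c` by `R_k` and adding `B_k` to `B^c` gives an EC of `M` containing
`(R_i, B_i)`, so by maximality its action set is `B_i`. But the collapse removes every action of
`B_i` from `M^c`, while `B^c` is a nonempty set of actions of `M^c`.
-/

open Finset
open scoped Classical

/-- A finite MDP with per-state disjoint action sets: `stOf` assigns to every
action the unique state at which it is available. -/
structure MDP (S A : Type) [Fintype S] [DecidableEq S] [Fintype A] [DecidableEq A] where
  act : S → Finset A
  act_ne : ∀ s, (act s).Nonempty
  stOf : A → S
  stOf_spec : ∀ s a, a ∈ act s → stOf a = s
  P : S → A → S → ℝ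
  P_nonneg : ∀ s a s', 0 ≤ P s a s'
  P_sum : ∀ s, ∀ a ∈ act s, ∑ s', P s a s' = 1

/-- A finite path of length `N`: states `st 0, …, st N` and actions
`ac 0, …, ac (N−1)`, each action available and each transition of positive
probability. -/
def IsPath {σ α : Type*} (act : σ → Finset α) (P : σ → α → σ → ℝ)
    (N : ℕ) (st : ℕ → σ) (ac : ℕ → α) : Prop :=
  ∀ k, k < N → ac k ∈ act (st k) ∧ 0 < P (st k) (ac k) (st (k + 1))

def stepIn {σ α : Type*} (act : σ → Finset α) (P : σ → α → σ → ℝ)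
    (R : Finset σ) (B : Finset α) (x y : σ) : Prop :=
  x ∈ R ∧ y ∈ R ∧ ∃ a ∈ B, a ∈ act x ∧ 0 < P x a y

def IsEC {σ α : Type*} (act : σ → Finset α) (P : σ → α → σ → ℝ)
    (R : Finset σ) (B : Finset α) : Prop :=
  R.Nonempty ∧ B.Nonempty ∧
  (∀ a ∈ B, ∃ s ∈ R, a ∈ act s) ∧
  (∀ s ∈ R, ∀ a ∈ B, a ∈ act s → ∀ s', 0 < P s a s' → s' ∈ R) ∧
  (∀ s ∈ R, ∀ s' ∈ R, Relation.ReflTransGen (stepIn act P R B) s s')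

def IsMEC {σ α : Type*} (act : σ → Finset α) (P : σ → α → σ → ℝ)
    (R : Finset σ) (B : Finset α) : Prop :=
  IsEC act P R B ∧
  ∀ R' B', IsEC act P R' B' → R ⊆ R' → B ⊆ B' → R = R' ∧ B = B'

/-- The state space of the collapsed MDP (before restricting to valid states):
original states, representative states `s_{(R_i,B_i)}` (one per collapsed EC), and
the two fresh states `s₊` (`Sum.inr true`) and `s₋` (`Sum.inr false`). -/
abbrev CS (S : Type) (n : ℕ) : Type := (S ⊕ Fin n) ⊕ Bool

/-- The action alphabet of the collapsed MDP: original actions, the `rem_i`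
actions (one per collapsed EC), and the self-loop actions `a₊` (`Sum.inr true`)
and `a₋` (`Sum.inr false`). -/
abbrev CA (A : Type) (n : ℕ) : Type := (A ⊕ Fin n) ⊕ Bool

variable {S A : Type} [Fintype S] [DecidableEq S] [Fintype A] [DecidableEq A] {n : ℕ}

def Valid (R : Fin n → Finset S) (x : CS S n) : Prop :=
  ∀ s : S, x = Sum.inl (Sum.inl s) → ∀ i, s ∉ R i

instance {R : Fin n → Finset S} : DecidablePred (Valid R) := fun x =>
  inferInstanceAs (Decidable (∀ s : S, x = Sum.inl (Sum.inl s) → ∀ i, s ∉ R i))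

/-- The state space `S^c` of the collapsed MDP. -/
abbrev CSv (R : Fin n → Finset S) : Type _ := {x : CS S n // Valid R x}

/-- `states(s^c)`: the set of original states represented by a collapsed state. -/
def statesOf (R : Fin n → Finset S) : CS S n → Finset S
  | Sum.inl (Sum.inl s) => {s}
  | Sum.inl (Sum.inr i) => R i
  | Sum.inr _ => ∅

/-- The map `collapsed : S → S^c`, sending a state to its representative if it
belongs to a collapsed EC and to itself otherwise. -/
noncomputable def collapseV (R : Fin n → Finset S) (s : S) : CSv R :=
  if h : ∃ i, s ∈ R i then
    ⟨Sum.inl (Sum.inr (Classical.choose h)), by intro t ht; simp at ht⟩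
  else
    ⟨Sum.inl (Sum.inl s), by
      intro t ht i hi
      simp only [Sum.inl.injEq] at ht
      subst ht
      exact h ⟨i, hi⟩⟩

/-- The terminal states `s₊ = term R true` and `s₋ = term R false` of the
collapsed MDP. -/
def term (R : Fin n → Finset S) (b : Bool) : CSv R :=
  ⟨Sum.inr b, by intro t ht; simp at ht⟩

/-- The representative state `s_{(R_i,B_i)}` of the `i`-th collapsed EC. -/
def repV (R : Fin n → Finset S) (i : Fin n) : CSv R :=
  ⟨Sum.inl (Sum.inr i), by intro t ht; simp at ht⟩

/-- The available actions `A^c` of the collapsed MDP. -/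
noncomputable def cAct (M : MDP S A) (R : Fin n → Finset S) (B : Fin n → Finset A) :
    CSv R → Finset (CA A n) := fun x =>
  match x.1 with
  | Sum.inl (Sum.inl s) => (M.act s).image fun a => Sum.inl (Sum.inl a)
  | Sum.inl (Sum.inr i) =>
      insert (Sum.inl (Sum.inr i))
        (((R i).biUnion M.act \ B i).image fun a => Sum.inl (Sum.inl a))
  | Sum.inr b => {Sum.inr b}

/-- The transition function `Δ^c` of the collapsed MDP. -/
noncomputable def cP (M : MDP S A) (R : Fin n → Finset S) (T : Finset S) :
    CSv R → CA A n → CSv R → ℝ := fun _x a y =>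
  match a with
  | Sum.inl (Sum.inl a₀) => ∑ s' ∈ statesOf R y.1, M.P (M.stOf a₀) a₀ s'
  | Sum.inl (Sum.inr i) =>
      if (R i ∩ T).Nonempty then (if y = term R true then 1 else 0)
      else (if y = term R false then 1 else 0)
  | Sum.inr b => if y = term R b then 1 else 0

theorem stepIn_mono {σ α : Type*} {act : σ → Finset α} {P : σ → α → σ → ℝ}
    {R R' : Finset σ} {B B' : Finset α} (hR : R ⊆ R') (hB : B ⊆ B') {x y : σ}
    (h : stepIn act P R B x y) : stepIn act P R' B' x y := by
  obtain ⟨hx, hy, a, ha, hact, hP⟩ := h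
  exact ⟨hR hx, hR hy, a, hB ha, hact, hP⟩

theorem Relation.ReflTransGen.lift_fibers {X Y : Type*} {r : X → X → Prop} {r' : Y → Y → Prop}
    (F : X → Set Y) (D : Set X)
    (hF : ∀ x ∈ D, ∀ s ∈ F x, ∀ t ∈ F x, ReflTransGen r' s t)
    (hstep : ∀ x y, r x y → y ∈ D ∧ ∃ s ∈ F x, ∃ t ∈ F y, r' s t)
    {x y : X} (hx : x ∈ D) (h : ReflTransGen r x y) {s t : Y} (hs : s ∈ F x) (ht : t ∈ F y) :
    ReflTransGen r' s t := by
  induction h generalizing t with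
  | refl => exact hF x hx s hs t ht
  | tail _ hzy ih =>
    obtain ⟨hyD, s₀, hs₀, t₀, ht₀, hr⟩ := hstep _ _ hzy
    exact ((ih hs₀).tail hr).trans (hF _ hyD t₀ ht₀ t ht)

namespace IsEC

variable {σ α : Type*} {act : σ → Finset α} {P : σ → α → σ → ℝ} {R : Finset σ} {B : Finset α}

theorem exists_mem_act (h : IsEC act P R B) {a : α} (ha : a ∈ B) : ∃ s ∈ R, a ∈ act s :=
  h.2.2.1 a ha

theorem mem_of_pos (h : IsEC act P R B) {s s' : σ} {a : α} (hs : s ∈ R) (ha : a ∈ B)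
    (hact : a ∈ act s) (hP : 0 < P s a s') : s' ∈ R :=
  h.2.2.2.1 s hs a ha hact s' hP

theorem reflTransGen (h : IsEC act P R B) {s s' : σ} (hs : s ∈ R) (hs' : s' ∈ R) :
    Relation.ReflTransGen (stepIn act P R B) s s' :=
  h.2.2.2.2 s hs s' hs'

theorem eq_of_absorbing (h : IsEC act P R B) {x y : σ} (hx : x ∈ R) (hy : y ∈ R)
    (habs : ∀ a ∈ act x, ∀ z, 0 < P x a z → z = x) : y = x := by
  suffices ∀ z, Relation.ReflTransGen (stepIn act P R B) x z → z = x from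
    this y (h.reflTransGen hx hy)
  intro z hz
  induction hz with
  | refl => rfl
  | tail _ hstep ih =>
    obtain ⟨-, -, a, -, ha, hP⟩ := hstep
    rw [ih] at ha hP
    exact habs a ha _ hP

end IsEC

section Collapse

variable {M : MDP S A} {R : Fin n → Finset S} {B : Fin n → Finset A} {T : Finset S}

omit [Fintype S] in
theorem mem_statesOf_collapseV (s : S) : s ∈ statesOf R (collapseV R s).1 := by
  by_cases h : ∃ i, s ∈ R i
  · simpa only [collapseV, dif_pos h, statesOf] using Classical.choose_spec h
  · simp only [collapseV, dif_neg h, statesOf, mem_singleton]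

omit [Fintype S] [DecidableEq S] in
theorem nonempty_statesOf (hR : ∀ k, (R k).Nonempty) {x : CSv R} (hx : ∀ b, x ≠ term R b) :
    (statesOf R x.1).Nonempty := by
  obtain ⟨(u | k) | b, _⟩ := x
  · exact singleton_nonempty u
  · exact hR k
  · exact absurd rfl (hx b)

theorem cP_inl_inl_pos_iff {x y : CSv R} {a : A} :
    0 < cP M R T x (Sum.inl (Sum.inl a)) y ↔ ∃ s ∈ statesOf R y.1, 0 < M.P (M.stOf a) a s :=
  sum_pos_iff_of_nonneg fun _ _ => M.P_nonneg _ _ _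

theorem exists_cP_term_pos (x : CSv R) {a : CA A n} (ha : ∀ a₀, a ≠ Sum.inl (Sum.inl a₀)) :
    ∃ b, 0 < cP M R T x a (term R b) := by
  rcases a with (a₀ | j) | b
  · exact absurd rfl (ha a₀)
  · by_cases hT : (R j ∩ T).Nonempty
    · exact ⟨true, by simp [cP, hT]⟩
    · exact ⟨false, by simp [cP, hT]⟩
  · exact ⟨b, by simp [cP]⟩

theorem eq_term_of_cP_pos {b : Bool} {a : CA A n} {y : CSv R} (ha : a ∈ cAct M R B (term R b))
    (hP : 0 < cP M R T (term R b) a y) : y = term R b := by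
  obtain rfl : a = Sum.inr b := mem_singleton.1 ha
  by_contra hy
  simp [cP, hy] at hP

theorem exists_mem_statesOf_of_mem_cAct {x : CSv R} {a : A}
    (ha : Sum.inl (Sum.inl a) ∈ cAct M R B x) : ∃ s ∈ statesOf R x.1, a ∈ M.act s := by
  obtain ⟨(u | k) | b, _⟩ := x
  · obtain ⟨a', ha', he⟩ := mem_image.1 ha
    cases he
    exact ⟨u, mem_singleton_self u, ha'⟩
  · obtain ⟨a', ha', he⟩ := mem_image.1 ((mem_insert.1 ha).resolve_left (by simp))
    cases he
    obtain ⟨s, hs, has⟩ := mem_biUnion.1 (mem_sdiff.1 ha').1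
    exact ⟨s, hs, has⟩
  · simp [cAct] at ha

theorem inl_inl_notMem_cAct (hdisj : ∀ i j, i ≠ j → Disjoint (R i) (R j)) {i : Fin n}
    (hi : IsEC M.act M.P (R i) (B i)) {a : A} (ha : a ∈ B i) (x : CSv R) :
    Sum.inl (Sum.inl a) ∉ cAct M R B x := by
  intro hax
  obtain ⟨t, ht, hat⟩ := hi.exists_mem_act ha
  have hstate : ∀ s, a ∈ M.act s → s = t := fun s hs =>
    (M.stOf_spec s a hs).symm.trans (M.stOf_spec t a hat)
  obtain ⟨(u | k) | b, hxv⟩ := x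
  · obtain ⟨a', ha', he⟩ := mem_image.1 hax
    cases he
    exact hxv u rfl i (hstate u ha' ▸ ht)
  · obtain ⟨a', ha', he⟩ := mem_image.1 ((mem_insert.1 hax).resolve_left (by simp))
    cases he
    obtain ⟨hmem, hnot⟩ := mem_sdiff.1 ha'
    obtain ⟨s, hs, has⟩ := mem_biUnion.1 hmem
    obtain rfl : k = i := by
      by_contra hki
      exact disjoint_left.1 (hdisj k i hki) hs (hstate s has ▸ ht)
    exact hnot ha
  · simp [cAct] at hax

variable {Rc : Finset (CSv R)} {Bc : Finset (CA A n)}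

theorem term_notMem (hc : IsEC (cAct M R B) (cP M R T) Rc Bc) {x : CSv R} (hx : x ∈ Rc)
    (hxt : ∀ b, x ≠ term R b) (b : Bool) : term R b ∉ Rc := fun hb =>
  hxt b (hc.eq_of_absorbing hb hx fun _ ha _ hP => eq_term_of_cP_pos ha hP)

theorem exists_eq_inl_inl_of_mem (hc : IsEC (cAct M R B) (cP M R T) Rc Bc)
    (hterm : ∀ b, term R b ∉ Rc) {a : CA A n} (ha : a ∈ Bc) : ∃ a₀, a = Sum.inl (Sum.inl a₀) := by
  by_contra! hne
  obtain ⟨x, hx, hax⟩ := hc.exists_mem_act ha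
  obtain ⟨b, hb⟩ := exists_cP_term_pos (M := M) (T := T) x hne
  exact hterm b (hc.mem_of_pos hx ha hax hb)

def expandStates (R : Fin n → Finset S) (Rc : Finset (CSv R)) : Finset S :=
  Rc.biUnion fun x => statesOf R x.1

def expandActions (R : Fin n → Finset S) (B : Fin n → Finset A) (Rc : Finset (CSv R))
    (Bc : Finset (CA A n)) : Finset A :=
  univ.filter (fun a => Sum.inl (Sum.inl a) ∈ Bc) ∪
    (univ.filter fun k => repV R k ∈ Rc).biUnion B

omit [Fintype S] in
theorem mem_expandStates {s : S} : s ∈ expandStates R Rc ↔ ∃ x ∈ Rc, s ∈ statesOf R x.1 :=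
  mem_biUnion

omit [Fintype S] in
theorem mem_expandActions {a : A} :
    a ∈ expandActions R B Rc Bc ↔ Sum.inl (Sum.inl a) ∈ Bc ∨ ∃ k, repV R k ∈ Rc ∧ a ∈ B k := by
  simp [expandActions]

omit [Fintype S] in
theorem subset_expandStates {k : Fin n} (hk : repV R k ∈ Rc) : R k ⊆ expandStates R Rc :=
  fun _ hs => mem_expandStates.2 ⟨_, hk, hs⟩

omit [Fintype S] in
theorem subset_expandActions {k : Fin n} (hk : repV R k ∈ Rc) :
    B k ⊆ expandActions R B Rc Bc :=
  fun _ ha => mem_expandActions.2 (Or.inr ⟨k, hk, ha⟩)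

theorem expand_exists_mem_act (hEC : ∀ k, IsEC M.act M.P (R k) (B k))
    (hc : IsEC (cAct M R B) (cP M R T) Rc Bc) {a : A} (ha : a ∈ expandActions R B Rc Bc) :
    ∃ s ∈ expandStates R Rc, a ∈ M.act s := by
  rcases mem_expandActions.1 ha with ha | ⟨k, hk, ha⟩
  · obtain ⟨x, hx, hax⟩ := hc.exists_mem_act ha
    obtain ⟨s, hs, has⟩ := exists_mem_statesOf_of_mem_cAct hax
    exact ⟨s, mem_expandStates.2 ⟨x, hx, hs⟩, has⟩
  · obtain ⟨s, hs, has⟩ := (hEC k).exists_mem_act ha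
    exact ⟨s, subset_expandStates hk hs, has⟩

theorem expand_mem_of_pos (hEC : ∀ k, IsEC M.act M.P (R k) (B k))
    (hc : IsEC (cAct M R B) (cP M R T) Rc Bc) {s s' : S} {a : A} (ha : a ∈ expandActions R B Rc Bc)
    (hact : a ∈ M.act s) (hP : 0 < M.P s a s') : s' ∈ expandStates R Rc := by
  rcases mem_expandActions.1 ha with ha | ⟨k, hk, ha⟩
  · obtain ⟨x, hx, hax⟩ := hc.exists_mem_act ha
    have hpos : 0 < cP M R T x (Sum.inl (Sum.inl a)) (collapseV R s') :=
      cP_inl_inl_pos_iff.2 ⟨s', mem_statesOf_collapseV s', M.stOf_spec s a hact ▸ hP⟩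
    exact mem_expandStates.2 ⟨_, hc.mem_of_pos hx ha hax hpos, mem_statesOf_collapseV s'⟩
  · obtain ⟨t, ht, hat⟩ := (hEC k).exists_mem_act ha
    have hts : t = s := (M.stOf_spec t a hat).symm.trans (M.stOf_spec s a hact)
    exact subset_expandStates hk ((hEC k).mem_of_pos ht ha hat (hts ▸ hP))

theorem reflTransGen_expand_of_mem_statesOf (hEC : ∀ k, IsEC M.act M.P (R k) (B k))
    {x : CSv R} (hx : x ∈ Rc) {s t : S} (hs : s ∈ statesOf R x.1) (ht : t ∈ statesOf R x.1) :
    Relation.ReflTransGen (stepIn M.act M.P (expandStates R Rc) (expandActions R B Rc Bc)) s t := by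
  obtain ⟨(u | k) | b, _⟩ := x
  · rw [mem_singleton.1 hs, mem_singleton.1 ht]
  · exact Relation.ReflTransGen.mono
      (fun _ _ => stepIn_mono (subset_expandStates hx) (subset_expandActions hx)) _ _
      ((hEC k).reflTransGen hs ht)
  · simp [statesOf] at hs

theorem exists_stepIn_expand_of_stepIn (hc : IsEC (cAct M R B) (cP M R T) Rc Bc)
    (hterm : ∀ b, term R b ∉ Rc) {x y : CSv R} (h : stepIn (cAct M R B) (cP M R T) Rc Bc x y) :
    ∃ s ∈ statesOf R x.1, ∃ t ∈ statesOf R y.1,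
      stepIn M.act M.P (expandStates R Rc) (expandActions R B Rc Bc) s t := by
  obtain ⟨hx, hy, a, ha, hax, hP⟩ := h
  obtain ⟨a₀, rfl⟩ := exists_eq_inl_inl_of_mem hc hterm ha
  obtain ⟨s, hs, has⟩ := exists_mem_statesOf_of_mem_cAct hax
  obtain ⟨t, ht, hPt⟩ := cP_inl_inl_pos_iff.1 hP
  exact ⟨s, hs, t, ht, mem_expandStates.2 ⟨x, hx, hs⟩, mem_expandStates.2 ⟨y, hy, ht⟩, a₀,
    mem_expandActions.2 (Or.inl ha), has, M.stOf_spec s a₀ has ▸ hPt⟩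

theorem isEC_expand (hEC : ∀ k, IsEC M.act M.P (R k) (B k))
    (hc : IsEC (cAct M R B) (cP M R T) Rc Bc) (hterm : ∀ b, term R b ∉ Rc) :
    IsEC M.act M.P (expandStates R Rc) (expandActions R B Rc Bc) := by
  refine ⟨?_, ?_, fun a ha => expand_exists_mem_act hEC hc ha,
    fun s _ a ha hact s' hP => expand_mem_of_pos hEC hc ha hact hP, fun s hs t ht => ?_⟩
  · obtain ⟨x, hx⟩ := hc.1
    obtain ⟨s, hs⟩ := nonempty_statesOf (fun k => (hEC k).1) fun b hb => hterm b (hb ▸ hx)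
    exact ⟨s, mem_expandStates.2 ⟨x, hx, hs⟩⟩
  · obtain ⟨a, ha⟩ := hc.2.1
    obtain ⟨a₀, rfl⟩ := exists_eq_inl_inl_of_mem hc hterm ha
    exact ⟨a₀, mem_expandActions.2 (Or.inl ha)⟩
  · obtain ⟨x, hx, hs⟩ := mem_expandStates.1 hs
    obtain ⟨y, hy, ht⟩ := mem_expandStates.1 ht
    exact Relation.ReflTransGen.lift_fibers (fun x => (statesOf R x.1 : Set S)) Rc
      (fun _ hx _ hs _ ht => reflTransGen_expand_of_mem_statesOf hEC hx hs ht)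
      (fun _ _ hxy => ⟨hxy.2.1, exists_stepIn_expand_of_stepIn hc hterm hxy⟩)
      hx (hc.reflTransGen hx hy) hs ht

end Collapse

/-- Representatives of collapsed MECs belong to no EC of the collapsed MDP. -/
theorem collapsed_mec_not_in_ec (M : MDP S A) (n : ℕ) (R : Fin n → Finset S) (B : Fin n → Finset A)
    (hEC : ∀ i, IsEC M.act M.P (R i) (B i))
    (hdisj : ∀ i j, i ≠ j → Disjoint (R i) (R j))
    (T : Finset S)
    (Mc : MDP (CSv R) (CA A n))
    (Hact : ∀ x, Mc.act x = cAct M R B x)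
    (HP : ∀ x a y, Mc.P x a y = cP M R T x a y)
    (I : Finset (Fin n)) (hI : ∀ i ∈ I, IsMEC M.act M.P (R i) (B i))
    (Rc : Finset (CSv R)) (Bc : Finset (CA A n))
    (hECc : IsEC Mc.act Mc.P Rc Bc) :
    ∀ i ∈ I, repV R i ∉ Rc := by
  intro i hi hrep
  have hc : IsEC (cAct M R B) (cP M R T) Rc Bc := by
    rwa [show Mc.act = cAct M R B from funext Hact,
      show Mc.P = cP M R T from funext fun x => funext fun a => funext (HP x a)] at hECc
  have hterm : ∀ b, term R b ∉ Rc :=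
    term_notMem hc hrep fun _ h => Sum.inl_ne_inr (congrArg Subtype.val h)
  have hBi : B i = expandActions R B Rc Bc :=
    ((hI i hi).2 _ _ (isEC_expand hEC hc hterm) (subset_expandStates hrep)
      (subset_expandActions hrep)).2
  obtain ⟨a, ha⟩ := hc.2.1
  obtain ⟨a₀, rfl⟩ := exists_eq_inl_inl_of_mem hc hterm ha
  obtain ⟨x, -, hax⟩ := hc.exists_mem_act ha
  exact inl_inl_notMem_cAct hdisj (hEC i) (hBi ▸ mem_expandActions.2 (Or.inl ha)) x hax
end

section
/- Let M^c = collapse(M, EC, ŝ, T) be the collapsed MDP of M for any set EC of end components with pairwise disjoint state sets. Then for every state s ∈ S, the value of s in M equals the value of collapsed(s) in M^c: val_T(s) (computed in M) = val_{collapsed(T)}(collapsed(s)) (computed in M^c) = val_{{s_+} ∪ (T ∩ S^c)}(collapsed(s)) (computed in M^c). -/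
/-!
STATEMENT 7: Collapsing preserves reachability values: for every state s of M,
val_T(s) computed in M equals the value of collapsed(s) in the collapsed MDP M^c,
both for the target collapsed(T) and for the target {s₊} ∪ (T ∩ S^c).
-/

open Finset
open scoped Classical

variable {S A : Type} [Fintype S] [DecidableEq S] [Fintype A] [DecidableEq A] {n : ℕ}

/-- `IsValue act hne P T v` states that `v` is the value function for reaching `T`:
the least fixed point of the Bellman operator in the pointwise order on `[0,1]^S`. -/
def IsValue {σ α : Type*} [Fintype σ] [DecidableEq σ] (act : σ → Finset α)
    (hne : ∀ s, (act s).Nonempty) (P : σ → α → σ → ℝ) (T : Finset σ) (v : σ → ℝ) :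
    Prop :=
  (∀ s, 0 ≤ v s ∧ v s ≤ 1) ∧
  (∀ s, v s = if s ∈ T then 1 else (act s).sup' (hne s) fun a => ∑ s', P s a s' * v s') ∧
  (∀ w : σ → ℝ, (∀ s, 0 ≤ w s ∧ w s ≤ 1) →
    (∀ s, w s = if s ∈ T then 1 else (act s).sup' (hne s) fun a => ∑ s', P s a s' * w s') →
    ∀ s, v s ≤ w s)

/-! ### Auxiliary machinery -/

set_option linter.unusedSectionVars false

section Bellman

variable {σ α : Type*} [Fintype σ] [DecidableEq σ] [Fintype α] [DecidableEq α]

/-- The Bellman operator. -/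
@[reducible] noncomputable def Bell (act : σ → Finset α) (hne : ∀ s, (act s).Nonempty)
    (P : σ → α → σ → ℝ) (T : Finset σ) (f : σ → ℝ) (s : σ) : ℝ :=
  if s ∈ T then 1 else (act s).sup' (hne s) fun a => ∑ s', P s a s' * f s'

theorem Bell_mono (act : σ → Finset α) (hne : ∀ s, (act s).Nonempty)
    (P : σ → α → σ → ℝ) (hP0 : ∀ s a s', 0 ≤ P s a s') (T : Finset σ)
    {f g : σ → ℝ} (hfg : ∀ s, f s ≤ g s) (s : σ) :
    Bell act hne P T f s ≤ Bell act hne P T g s := by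
  unfold Bell
  split
  · exact le_refl 1
  · apply Finset.sup'_le
    intro a ha
    refine le_trans ?_ (Finset.le_sup' _ ha)
    exact Finset.sum_le_sum fun t _ => mul_le_mul_of_nonneg_left (hfg t) (hP0 _ _ _)

theorem Bell_one_le (act : σ → Finset α) (hne : ∀ s, (act s).Nonempty)
    (P : σ → α → σ → ℝ) (hP1 : ∀ s, ∀ a ∈ act s, ∑ s', P s a s' = 1) (T : Finset σ)
    (s : σ) : Bell act hne P T (fun _ => (1:ℝ)) s ≤ 1 := by
  unfold Bell
  split
  · exact le_refl 1
  · apply Finset.sup'_le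
    intro a ha
    simp only [mul_one]
    exact le_of_eq (hP1 s a ha)

/-- Knaster–Tarski: the least fixed point `w` lies below every pre-fixed point
of the Bellman operator. -/
theorem lfp_le_prefixed (act : σ → Finset α) (hne : ∀ s, (act s).Nonempty)
    (P : σ → α → σ → ℝ) (hP0 : ∀ s a s', 0 ≤ P s a s')
    (hP1 : ∀ s, ∀ a ∈ act s, ∑ s', P s a s' = 1)
    (T : Finset σ) (w : σ → ℝ) (hw : IsValue act hne P T w)
    (h : σ → ℝ) (hb : ∀ s, 0 ≤ h s ∧ h s ≤ 1)
    (hpre : ∀ s, Bell act hne P T h s ≤ h s) :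
    ∀ s, w s ≤ h s := by
  classical
  set PF : Set (σ → ℝ) :=
    {f | (∀ s, 0 ≤ f s ∧ f s ≤ 1) ∧ ∀ s, Bell act hne P T f s ≤ f s} with hPF
  have hone : (fun _ : σ => (1:ℝ)) ∈ PF :=
    ⟨fun s => ⟨zero_le_one, le_refl 1⟩, Bell_one_le act hne P hP1 T⟩
  set z : σ → ℝ := fun s => sInf ((fun f : σ → ℝ => f s) '' PF) with hz
  have hbdd : ∀ s : σ, BddBelow ((fun f : σ → ℝ => f s) '' PF) := by
    intro s
    refine ⟨0, ?_⟩
    rintro y ⟨f, hf, rfl⟩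
    exact (hf.1 s).1
  have hne' : ∀ s : σ, ((fun f : σ → ℝ => f s) '' PF).Nonempty :=
    fun s => ⟨1, ⟨_, hone, rfl⟩⟩
  have hzle : ∀ f ∈ PF, ∀ s, z s ≤ f s := fun f hf s => csInf_le (hbdd s) ⟨f, hf, rfl⟩
  have hz0 : ∀ s, 0 ≤ z s := fun s =>
    le_csInf (hne' s) (by rintro y ⟨f, hf, rfl⟩; exact (hf.1 s).1)
  have hz1 : ∀ s, z s ≤ 1 := fun s => hzle _ hone s
  have hstep : ∀ s, Bell act hne P T z s ≤ z s := by
    intro s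
    apply le_csInf (hne' s)
    rintro y ⟨f, hf, rfl⟩
    exact le_trans (Bell_mono act hne P hP0 T (hzle f hf) s) (hf.2 s)
  have hBz_mem : Bell act hne P T z ∈ PF := by
    constructor
    · intro s
      constructor
      · unfold Bell
        split
        · exact zero_le_one
        · obtain ⟨a, ha⟩ := hne s
          refine le_trans ?_ (Finset.le_sup' _ ha)
          exact Finset.sum_nonneg fun t _ => mul_nonneg (hP0 _ _ _) (hz0 t)
      · exact le_trans (Bell_mono act hne P hP0 T hz1 s) (Bell_one_le act hne P hP1 T s)
    · intro s
      exact Bell_mono act hne P hP0 T hstep s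
  have hfix : ∀ s, z s = Bell act hne P T z s :=
    fun s => le_antisymm (hzle _ hBz_mem s) (hstep s)
  have hwz : ∀ s, w s ≤ z s := hw.2.2 z (fun s => ⟨hz0 s, hz1 s⟩) hfix
  exact fun s => le_trans (hwz s) (hzle h ⟨hb, hpre⟩ s)

theorem superharmonic (act : σ → Finset α) (hne : ∀ s, (act s).Nonempty)
    (P : σ → α → σ → ℝ) (hP0 : ∀ s a s', 0 ≤ P s a s')
    (hP1 : ∀ s, ∀ a ∈ act s, ∑ s', P s a s' = 1) (T : Finset σ) (v : σ → ℝ)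
    (hbv : ∀ s, 0 ≤ v s ∧ v s ≤ 1)
    (hfix : ∀ s, v s = Bell act hne P T v s) :
    ∀ s a, a ∈ act s → ∑ t, P s a t * v t ≤ v s := by
  intro s a ha
  rw [hfix s]
  unfold Bell
  split
  · calc ∑ t, P s a t * v t ≤ ∑ t, P s a t * 1 :=
        Finset.sum_le_sum fun t _ => mul_le_mul_of_nonneg_left (hbv t).2 (hP0 _ _ _)
      _ = 1 := by simp only [mul_one]; exact hP1 s a ha
  · exact Finset.le_sup' (fun a => ∑ s', P s a s' * v s') ha

theorem sum_delta {β : Type*} [Fintype β] [DecidableEq β] (c : β) (w : β → ℝ) :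
    ∑ y, (if y = c then (1:ℝ) else 0) * w y = w c := by
  have h : ∀ y : β, (if y = c then (1:ℝ) else 0) * w y = if y = c then w y else 0 := by
    intro y; split <;> simp
  rw [Finset.sum_congr rfl fun y _ => h y, Finset.sum_ite_eq' Finset.univ c w,
    if_pos (Finset.mem_univ c)]

theorem sup'_transport {β γ : Type*} [DecidableEq γ] (s : Finset β) (hs : s.Nonempty)
    (t : Finset γ) (ht : t.Nonempty) (f : β → γ) (h : t = s.image f)
    (g : γ → ℝ) (g' : β → ℝ) (hg : ∀ a ∈ s, g (f a) = g' a) :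
    t.sup' ht g = s.sup' hs g' := by
  subst h
  rw [Finset.sup'_image]
  exact Finset.sup'_congr _ rfl hg

end Bellman

/-- Any `[0,1]`-valued fixed point of the Bellman operator is constant on every
end component. -/
theorem ec_const (M : MDP S A) {R : Finset S} {B : Finset A}
    (hec : IsEC M.act M.P R B) (T : Finset S) (v : S → ℝ)
    (hbv : ∀ s, 0 ≤ v s ∧ v s ≤ 1)
    (hfix : ∀ s, v s = Bell M.act M.act_ne M.P T v s) :
    ∀ s ∈ R, ∀ s' ∈ R, v s = v s' := by
  obtain ⟨hRne, hBne, hBst, hclosed, hconn⟩ := hec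
  set m := R.inf' hRne v with hm
  have key : ∀ x y, stepIn M.act M.P R B x y → v x = m → v y = m := by
    rintro x y ⟨hxR, hyR, a, haB, hax, hPxy⟩ hvx
    have h1 : ∑ t, M.P x a t * v t ≤ m := by
      rw [← hvx]
      exact superharmonic M.act M.act_ne M.P M.P_nonneg M.P_sum T v hbv hfix x a hax
    have h2 : ∀ t, M.P x a t * m ≤ M.P x a t * v t := by
      intro t
      rcases eq_or_lt_of_le (M.P_nonneg x a t) with h | h
      · rw [← h]; simp
      · have htR := hclosed x hxR a haB hax t h
        exact mul_le_mul_of_nonneg_left (Finset.inf'_le v htR) (le_of_lt h)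
    have h3 : ∑ t, M.P x a t * m = m := by
      rw [← Finset.sum_mul, M.P_sum x a hax, one_mul]
    have h4 : ∑ t, M.P x a t * (v t - m) = 0 := by
      have hle : ∑ t, M.P x a t * (v t - m) ≤ 0 := by
        simp only [mul_sub]
        rw [Finset.sum_sub_distrib, h3]
        linarith
      have hge : 0 ≤ ∑ t, M.P x a t * (v t - m) := by
        apply Finset.sum_nonneg
        intro t _
        have := h2 t
        nlinarith
      linarith
    have h5 := (Finset.sum_eq_zero_iff_of_nonneg (fun t _ => by
      have := h2 t; nlinarith)).1 h4 y (Finset.mem_univ y)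
    have : v y - m = 0 := by
      by_contra hne0
      exact hne0 (by
        rcases mul_eq_zero.1 h5 with h | h
        · exact absurd h (ne_of_gt hPxy)
        · exact h)
    linarith
  have reach : ∀ x y, Relation.ReflTransGen (stepIn M.act M.P R B) x y →
      v x = m → v y = m := by
    intro x y hxy
    induction hxy with
    | refl => exact id
    | tail _ hbc ih => intro hx; exact key _ _ hbc (ih hx)
  obtain ⟨s₀, hs₀R, hs₀⟩ := Finset.exists_mem_eq_inf' hRne v
  have hall : ∀ s ∈ R, v s = m := fun s hs => reach s₀ s (hconn s₀ hs₀R s hs) hs₀.symm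
  intro s hs s' hs'
  rw [hall s hs, hall s' hs']

/-- Every state of an end component has an available action in `B`. -/
theorem ec_exists_action (M : MDP S A) {R : Finset S} {B : Finset A}
    (hec : IsEC M.act M.P R B) :
    ∀ s ∈ R, ∃ a ∈ B, a ∈ M.act s := by
  intro s hs
  obtain ⟨hRne, ⟨a₀, ha₀⟩, hBst, hclosed, hconn⟩ := hec
  obtain ⟨s₀, hs₀R, ha₀s₀⟩ := hBst a₀ ha₀
  rcases (hconn s hs s₀ hs₀R).cases_head with heq | ⟨y, hstep, _⟩
  · exact ⟨a₀, ha₀, by rw [heq]; exact ha₀s₀⟩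
  · obtain ⟨_, _, a, haB, has, _⟩ := hstep
    exact ⟨a, haB, has⟩
/-! ### Properties of the collapse map -/

theorem collapseV_eq_rep {R : Fin n → Finset S}
    (hdisj : ∀ i j, i ≠ j → Disjoint (R i) (R j))
    {s : S} {i : Fin n} (hs : s ∈ R i) : collapseV R s = repV R i := by
  have h : ∃ j, s ∈ R j := ⟨i, hs⟩
  have hch : Classical.choose h = i := by
    by_contra hne
    exact (Finset.disjoint_left.1 (hdisj _ _ hne) (Classical.choose_spec h)) hs
  apply Subtype.ext
  rw [collapseV, dif_pos h]
  simp [repV, hch]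

theorem collapseV_eq_inl {R : Fin n → Finset S} {s : S} (hs : ∀ i, s ∉ R i) :
    (collapseV R s).1 = Sum.inl (Sum.inl s) := by
  rw [collapseV, dif_neg (by rintro ⟨i, hi⟩; exact hs i hi)]

theorem collapseV_val (R : Fin n → Finset S)
    (hdisj : ∀ i j, i ≠ j → Disjoint (R i) (R j)) (t : S) :
    ((∀ i, t ∉ R i) ∧ (collapseV R t).1 = Sum.inl (Sum.inl t)) ∨
      (∃ i, t ∈ R i ∧ (collapseV R t).1 = Sum.inl (Sum.inr i)) := by
  by_cases hc : ∃ j, t ∈ R j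
  · obtain ⟨j, hj⟩ := hc
    exact Or.inr ⟨j, hj, by rw [collapseV_eq_rep hdisj hj]; rfl⟩
  · push_neg at hc
    exact Or.inl ⟨hc, collapseV_eq_inl hc⟩

theorem statesOf_eq_fiber {R : Fin n → Finset S}
    (hdisj : ∀ i j, i ≠ j → Disjoint (R i) (R j)) (y : CSv R) :
    statesOf R y.1 = Finset.univ.filter (fun t => collapseV R t = y) := by
  obtain ⟨(s | i) | b, hy⟩ := y
  · ext t
    simp only [statesOf, Finset.mem_singleton, Finset.mem_filter, Finset.mem_univ, true_and]
    constructor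
    · rintro rfl
      exact Subtype.ext (collapseV_eq_inl (fun i => hy t rfl i))
    · intro h
      have h' := congrArg Subtype.val h
      rcases collapseV_val R hdisj t with ⟨_, hv⟩ | ⟨j, _, hv⟩
      · rw [hv] at h'; simpa using h'
      · rw [hv] at h'; simp at h'
  · ext t
    simp only [statesOf, Finset.mem_filter, Finset.mem_univ, true_and]
    constructor
    · intro ht
      exact (collapseV_eq_rep hdisj ht).trans (Subtype.ext rfl)
    · intro h
      have h' := congrArg Subtype.val h
      rcases collapseV_val R hdisj t with ⟨_, hv⟩ | ⟨j, hj, hv⟩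
      · rw [hv] at h'; simp at h'
      · rw [hv] at h'
        simp only [Sum.inl.injEq, Sum.inr.injEq] at h'
        rwa [← h']
  · ext t
    simp only [statesOf, Finset.notMem_empty, Finset.mem_filter, Finset.mem_univ,
      true_and, false_iff]
    intro h
    have h' := congrArg Subtype.val h
    rcases collapseV_val R hdisj t with ⟨_, hv⟩ | ⟨j, _, hv⟩ <;>
      · rw [hv] at h'; simp at h'

/-! ### Reduction lemmas for `cAct` and `cP` -/

theorem cAct_eq_inl (M : MDP S A) (R : Fin n → Finset S) (B : Fin n → Finset A)
    (x : CSv R) (s : S) (h : x.1 = Sum.inl (Sum.inl s)) :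
    cAct M R B x = (M.act s).image fun a => (Sum.inl (Sum.inl a) : CA A n) := by
  obtain ⟨xv, hxv⟩ := x
  simp only at h
  subst h
  rfl

theorem cAct_rep (M : MDP S A) (R : Fin n → Finset S) (B : Fin n → Finset A) (i : Fin n) :
    cAct M R B (repV R i) = insert (Sum.inl (Sum.inr i))
      (((R i).biUnion M.act \ B i).image fun a => (Sum.inl (Sum.inl a) : CA A n)) := rfl

theorem cAct_term (M : MDP S A) (R : Fin n → Finset S) (B : Fin n → Finset A) (b : Bool) :
    cAct M R B (term R b) = {Sum.inr b} := rfl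

theorem cP_inl (M : MDP S A) (R : Fin n → Finset S) (T : Finset S)
    (x y : CSv R) (a : A) :
    cP M R T x (Sum.inl (Sum.inl a)) y = ∑ t ∈ statesOf R y.1, M.P (M.stOf a) a t := rfl

theorem cP_rem (M : MDP S A) (R : Fin n → Finset S) (T : Finset S)
    (x y : CSv R) (i : Fin n) :
    cP M R T x (Sum.inl (Sum.inr i)) y =
      if (R i ∩ T).Nonempty then (if y = term R true then 1 else 0)
      else (if y = term R false then 1 else 0) := rfl

theorem cP_inr (M : MDP S A) (R : Fin n → Finset S) (T : Finset S)
    (x y : CSv R) (b : Bool) :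
    cP M R T x (Sum.inr b) y = if y = term R b then 1 else 0 := rfl

/-- Transport of expected values of original actions through the collapse map. -/
theorem sum_cP (M : MDP S A) {R : Fin n → Finset S}
    (hdisj : ∀ i j, i ≠ j → Disjoint (R i) (R j)) (T : Finset S)
    (a₀ : A) (w : CSv R → ℝ) (x : CSv R) :
    ∑ y : CSv R, cP M R T x (Sum.inl (Sum.inl a₀)) y * w y
      = ∑ t : S, M.P (M.stOf a₀) a₀ t * w (collapseV R t) := by
  have key : ∀ y : CSv R, cP M R T x (Sum.inl (Sum.inl a₀)) y * w y
      = ∑ t ∈ Finset.univ.filter (fun t => collapseV R t = y),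
          M.P (M.stOf a₀) a₀ t * w (collapseV R t) := by
    intro y
    rw [cP_inl, statesOf_eq_fiber hdisj y, Finset.sum_mul]
    apply Finset.sum_congr rfl
    intro t ht
    rw [(Finset.mem_filter.1 ht).2]
  rw [Finset.sum_congr rfl (fun y _ => key y)]
  exact Finset.sum_fiberwise _ _ _

/-- The function transferring a value function of `M` to the collapsed MDP. -/
noncomputable def hAux (R : Fin n → Finset S) (hne : ∀ i, (R i).Nonempty)
    (v : S → ℝ) : CSv R → ℝ := fun y =>
  Sum.elim (Sum.elim v (fun i => (R i).sup' (hne i) v))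
    (fun b => if b then (1:ℝ) else 0) y.1

theorem hAux_inl {R : Fin n → Finset S} (hne : ∀ i, (R i).Nonempty) (v : S → ℝ)
    (y : CSv R) (s : S) (h : y.1 = Sum.inl (Sum.inl s)) :
    hAux R hne v y = v s := by
  unfold hAux; rw [h]; rfl

theorem hAux_rep {R : Fin n → Finset S} (hne : ∀ i, (R i).Nonempty) (v : S → ℝ)
    (i : Fin n) : hAux R hne v (repV R i) = (R i).sup' (hne i) v := rfl

theorem hAux_term {R : Fin n → Finset S} (hne : ∀ i, (R i).Nonempty) (v : S → ℝ)
    (b : Bool) : hAux R hne v (term R b) = if b then 1 else 0 := rfl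
/-- Master lemma: under abstract hypotheses on the collapsed target `Tc`,
the collapsed value function pulls back to the original one. -/
theorem master (M : MDP S A) (R : Fin n → Finset S) (B : Fin n → Finset A)
    (hEC : ∀ i, IsEC M.act M.P (R i) (B i))
    (hdisj : ∀ i j, i ≠ j → Disjoint (R i) (R j))
    (T : Finset S)
    (Mc : MDP (CSv R) (CA A n))
    (Hact : ∀ x, Mc.act x = cAct M R B x)
    (HP : ∀ x a y, Mc.P x a y = cP M R T x a y)
    (v : S → ℝ) (hv : IsValue M.act M.act_ne M.P T v)
    (Tc : Finset (CSv R)) (w : CSv R → ℝ)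
    (hw : IsValue Mc.act Mc.act_ne Mc.P Tc w)
    (H1 : ∀ s : S, (∀ i, s ∉ R i) → (collapseV R s ∈ Tc ↔ s ∈ T))
    (H2 : ∀ i, (R i ∩ T).Nonempty → w (repV R i) = 1)
    (H3 : ∀ i, ¬(R i ∩ T).Nonempty → repV R i ∉ Tc)
    (H5 : term R false ∉ Tc) :
    ∀ s, v s = w (collapseV R s) := by
  obtain ⟨hvb, hvfix, hvmin⟩ := hv
  obtain ⟨hwb, hwfix, hwmin⟩ := hw
  have hvBell : ∀ s, v s = Bell M.act M.act_ne M.P T v s := hvfix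
  have hsup : ∀ s a, a ∈ M.act s → ∑ t, M.P s a t * v t ≤ v s :=
    superharmonic M.act M.act_ne M.P M.P_nonneg M.P_sum T v hvb hvBell
  have hconstEC : ∀ i, ∀ s ∈ R i, ∀ s' ∈ R i, v s = v s' :=
    fun i => ec_const M (hEC i) T v hvb hvBell
  have hBact : ∀ i, ∀ s ∈ R i, ∃ a ∈ B i, a ∈ M.act s :=
    fun i => ec_exists_action M (hEC i)
  have hRne : ∀ i, (R i).Nonempty := fun i => (hEC i).1
  -- the sum transport, with Mc.P in place of cP
  have hsum_transport : ∀ (x : CSv R) (a : A) (f : CSv R → ℝ),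
      ∑ y, Mc.P x (Sum.inl (Sum.inl a)) y * f y
        = ∑ t, M.P (M.stOf a) a t * f (collapseV R t) := by
    intro x a f
    rw [Finset.sum_congr rfl fun y _ => by rw [HP]]
    exact sum_cP M hdisj T a f x
  ------------------------------------------------------------------
  -- Part A : v ≤ w ∘ collapseV
  ------------------------------------------------------------------
  have hufix : ∀ s, w (collapseV R s) =
      Bell M.act M.act_ne M.P T (fun t => w (collapseV R t)) s := by
    intro s
    by_cases hs : ∃ i, s ∈ R i
    · obtain ⟨i, hsi⟩ := hs
      have hcol : collapseV R s = repV R i := collapseV_eq_rep hdisj hsi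
      have huRi : ∀ t ∈ R i, w (collapseV R t) = w (repV R i) :=
        fun t ht => congrArg w (collapseV_eq_rep hdisj ht)
      have hBsum : ∀ a ∈ B i, a ∈ M.act s →
          ∑ t, M.P s a t * w (collapseV R t) = w (repV R i) := by
        intro a haB haa
        have hterm : ∀ t, M.P s a t * w (collapseV R t) = M.P s a t * w (repV R i) := by
          intro t
          rcases eq_or_lt_of_le (M.P_nonneg s a t) with h | h
          · rw [← h]; ring
          · rw [huRi t ((hEC i).2.2.2.1 s hsi a haB haa t h)]
        rw [Finset.sum_congr rfl fun t _ => hterm t, ← Finset.sum_mul,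
          M.P_sum s a haa, one_mul]
      by_cases hT : (R i ∩ T).Nonempty
      · -- the EC contains a target state, the value at the representative is 1
        have hw1 : w (repV R i) = 1 := H2 i hT
        unfold Bell
        rw [hcol, hw1]
        split
        · rfl
        · apply le_antisymm
          · obtain ⟨b, hbB, hbact⟩ := hBact i s hsi
            refine le_trans (le_of_eq ?_)
              (Finset.le_sup' (fun a => ∑ t, M.P s a t * w (collapseV R t)) hbact)
            rw [hBsum b hbB hbact, hw1]
          · apply Finset.sup'_le
            intro a ha
            calc ∑ t, M.P s a t * w (collapseV R t)
                ≤ ∑ t, M.P s a t * 1 := Finset.sum_le_sum fun t _ =>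
                  mul_le_mul_of_nonneg_left (hwb _).2 (M.P_nonneg _ _ _)
              _ = 1 := by simp only [mul_one]; exact M.P_sum s a ha
      · -- the EC contains no target state
        have hsT : s ∉ T := fun h => hT ⟨s, Finset.mem_inter.2 ⟨hsi, h⟩⟩
        have hrep_not : repV R i ∉ Tc := H3 i hT
        have heq := hwfix (repV R i)
        rw [if_neg hrep_not] at heq
        unfold Bell
        rw [if_neg hsT, hcol]
        apply le_antisymm
        · -- w (rep i) ≤ sup, via a B-action available at s
          obtain ⟨b, hbB, hbact⟩ := hBact i s hsi
          exact le_trans (le_of_eq (hBsum b hbB hbact).symm)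
            (Finset.le_sup' (fun a => ∑ t, M.P s a t * w (collapseV R t)) hbact)
        · apply Finset.sup'_le
          intro a ha
          by_cases haB : a ∈ B i
          · exact le_of_eq (hBsum a haB ha)
          · -- exit action, available at the representative state
            have hmem : (Sum.inl (Sum.inl a) : CA A n) ∈ Mc.act (repV R i) := by
              rw [Hact, cAct_rep]
              exact Finset.mem_insert_of_mem (Finset.mem_image_of_mem _
                (Finset.mem_sdiff.2 ⟨Finset.mem_biUnion.2 ⟨s, hsi, ha⟩, haB⟩))
            have hterm : ∑ y, Mc.P (repV R i) (Sum.inl (Sum.inl a)) y * w y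
                = ∑ t, M.P s a t * w (collapseV R t) := by
              rw [hsum_transport, M.stOf_spec s a ha]
            calc ∑ t, M.P s a t * w (collapseV R t)
                = ∑ y, Mc.P (repV R i) (Sum.inl (Sum.inl a)) y * w y := hterm.symm
              _ ≤ (Mc.act (repV R i)).sup' (Mc.act_ne _)
                    (fun α => ∑ y, Mc.P (repV R i) α y * w y) :=
                  Finset.le_sup' (fun α => ∑ y, Mc.P (repV R i) α y * w y) hmem
              _ = w (repV R i) := heq.symm
    · push_neg at hs
      have hcol : (collapseV R s).1 = Sum.inl (Sum.inl s) := collapseV_eq_inl hs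
      have heq := hwfix (collapseV R s)
      unfold Bell
      by_cases hT : s ∈ T
      · rw [if_pos hT]
        rw [if_pos ((H1 s hs).2 hT)] at heq
        exact heq
      · rw [if_neg hT]
        rw [if_neg (fun hmem => hT ((H1 s hs).1 hmem))] at heq
        rw [heq]
        apply sup'_transport (M.act s) (M.act_ne s) _ (Mc.act_ne _)
          (fun a => (Sum.inl (Sum.inl a) : CA A n))
          ((Hact _).trans (cAct_eq_inl M R B _ s hcol))
        intro a ha
        show ∑ y, Mc.P (collapseV R s) (Sum.inl (Sum.inl a)) y * w y
            = ∑ t, M.P s a t * w (collapseV R t)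
        rw [hsum_transport, M.stOf_spec s a ha]
  have hA : ∀ s, v s ≤ w (collapseV R s) :=
    hvmin (fun t => w (collapseV R t)) (fun s => hwb _) hufix
  ------------------------------------------------------------------
  -- Part B : w ≤ hAux, the transfer of v, hence w ∘ collapseV ≤ v
  ------------------------------------------------------------------
  have hcolh : ∀ t, hAux R hRne v (collapseV R t) = v t := by
    intro t
    rcases collapseV_val R hdisj t with ⟨_, hv1⟩ | ⟨i, hi, hv1⟩
    · exact hAux_inl hRne v _ t hv1
    · have : collapseV R t = repV R i := collapseV_eq_rep hdisj hi
      rw [this, hAux_rep]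
      obtain ⟨t', ht', he⟩ := Finset.exists_mem_eq_sup' (hRne i) v
      rw [he]
      exact hconstEC i t' ht' t hi
  have hrep_sup : ∀ i, ∀ t ∈ R i, (R i).sup' (hRne i) v = v t := by
    intro i t ht
    obtain ⟨t', ht', he⟩ := Finset.exists_mem_eq_sup' (hRne i) v
    rw [he]
    exact hconstEC i t' ht' t ht
  have hhb : ∀ y, 0 ≤ hAux R hRne v y ∧ hAux R hRne v y ≤ 1 := by
    intro y
    obtain ⟨(s | i) | b, hy⟩ := y
    · exact hvb s
    · constructor
      · obtain ⟨t, ht⟩ := hRne i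
        exact le_trans (hvb t).1 (Finset.le_sup' v ht)
      · exact Finset.sup'_le (hRne i) v fun t _ => (hvb t).2
    · show 0 ≤ (if b then (1:ℝ) else 0) ∧ (if b then (1:ℝ) else 0) ≤ 1
      split <;> norm_num
  have hpre : ∀ y, Bell Mc.act Mc.act_ne Mc.P Tc (hAux R hRne v) y
      ≤ hAux R hRne v y := by
    intro y
    obtain ⟨(s | i) | b, hy⟩ := y
    · -- original state
      have hs : ∀ i, s ∉ R i := fun i => hy s rfl i
      have hycol : collapseV R s = ⟨Sum.inl (Sum.inl s), hy⟩ :=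
        Subtype.ext (collapseV_eq_inl hs)
      unfold Bell
      split
      · -- target
        rename_i hmem
        have hsT : s ∈ T := (H1 s hs).1 (hycol ▸ hmem)
        have : hAux R hRne v ⟨Sum.inl (Sum.inl s), hy⟩ = v s := rfl
        rw [this, hvfix s, if_pos hsT]
      · apply Finset.sup'_le
        intro α hα
        rw [Hact, cAct_eq_inl M R B _ s rfl] at hα
        obtain ⟨a, ha, rfl⟩ := Finset.mem_image.1 hα
        show ∑ y', Mc.P ⟨Sum.inl (Sum.inl s), hy⟩ (Sum.inl (Sum.inl a)) y'
            * hAux R hRne v y' ≤ hAux R hRne v ⟨Sum.inl (Sum.inl s), hy⟩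
        rw [hsum_transport, M.stOf_spec s a ha]
        have : ∑ t, M.P s a t * hAux R hRne v (collapseV R t) = ∑ t, M.P s a t * v t :=
          Finset.sum_congr rfl fun t _ => by rw [hcolh t]
        rw [this]
        exact hsup s a ha
    · -- representative state
      have hyrep : (⟨Sum.inl (Sum.inr i), hy⟩ : CSv R) = repV R i := Subtype.ext rfl
      rw [hyrep]
      unfold Bell
      split
      · -- rep i ∈ Tc, hence the EC meets the target
        rename_i hmem
        have hT : (R i ∩ T).Nonempty := by
          by_contra h
          exact H3 i h hmem
        obtain ⟨t, ht⟩ := hT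
        have htR := (Finset.mem_inter.1 ht).1
        have htT := (Finset.mem_inter.1 ht).2
        rw [hAux_rep, hrep_sup i t htR, hvfix t, if_pos htT]
      · apply Finset.sup'_le
        intro α hα
        rw [Hact, cAct_rep] at hα
        rcases Finset.mem_insert.1 hα with rfl | hα'
        · -- the rem action
          have hsum : ∑ y', Mc.P (repV R i) (Sum.inl (Sum.inr i)) y' * hAux R hRne v y'
              = if (R i ∩ T).Nonempty then hAux R hRne v (term R true)
                else hAux R hRne v (term R false) := by
            rw [Finset.sum_congr rfl fun y' _ => by rw [HP, cP_rem]]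
            by_cases hT : (R i ∩ T).Nonempty
            · rw [if_pos hT, Finset.sum_congr rfl fun y' _ => by rw [if_pos hT],
                sum_delta]
            · rw [if_neg hT, Finset.sum_congr rfl fun y' _ => by rw [if_neg hT],
                sum_delta]
          rw [hsum]
          by_cases hT : (R i ∩ T).Nonempty
          · rw [if_pos hT, hAux_term, if_pos rfl]
            obtain ⟨t, ht⟩ := hT
            have htR := (Finset.mem_inter.1 ht).1
            have htT := (Finset.mem_inter.1 ht).2
            rw [hAux_rep, hrep_sup i t htR, hvfix t, if_pos htT]
          · rw [if_neg hT, hAux_term]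
            obtain ⟨t, ht⟩ := hRne i
            rw [hAux_rep, hrep_sup i t ht]
            simp only [Bool.false_eq_true, if_false]
            exact (hvb t).1
        · -- an exit action
          obtain ⟨a, haE, rfl⟩ := Finset.mem_image.1 hα'
          obtain ⟨hab, _⟩ := Finset.mem_sdiff.1 haE
          obtain ⟨t, htR, hat⟩ := Finset.mem_biUnion.1 hab
          show ∑ y', Mc.P (repV R i) (Sum.inl (Sum.inl a)) y' * hAux R hRne v y'
              ≤ hAux R hRne v (repV R i)
          rw [hsum_transport, M.stOf_spec t a hat]
          have : ∑ t', M.P t a t' * hAux R hRne v (collapseV R t')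
              = ∑ t', M.P t a t' * v t' :=
            Finset.sum_congr rfl fun t' _ => by rw [hcolh t']
          rw [this, hAux_rep, hrep_sup i t htR]
          exact hsup t a hat
    · -- terminal states
      have hyterm : (⟨Sum.inr b, hy⟩ : CSv R) = term R b := Subtype.ext rfl
      rw [hyterm]
      unfold Bell
      split
      · -- term b ∈ Tc : then b = true and hAux = 1
        rename_i hmem
        cases b with
        | false => exact absurd hmem H5
        | true => rw [hAux_term]; norm_num
      · apply Finset.sup'_le
        intro α hα
        rw [Hact, cAct_term, Finset.mem_singleton] at hα
        subst hα
        have heval : ∑ y', Mc.P (term R b) (Sum.inr b) y' * hAux R hRne v y'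
            = hAux R hRne v (term R b) := by
          rw [Finset.sum_congr rfl fun y' _ => by rw [HP, cP_inr], sum_delta]
        exact le_of_eq heval
  have hB : ∀ y, w y ≤ hAux R hRne v y :=
    lfp_le_prefixed Mc.act Mc.act_ne Mc.P Mc.P_nonneg Mc.P_sum Tc w
      ⟨hwb, hwfix, hwmin⟩ (hAux R hRne v) hhb hpre
  intro s
  exact le_antisymm (hA s) (le_trans (hB (collapseV R s)) (le_of_eq (hcolh s)))
/-- Collapsing preserves the maximal reachability probability. -/
theorem collapse_reachability_equal (M : MDP S A) (n : ℕ) (R : Fin n → Finset S) (B : Fin n → Finset A)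
    (hEC : ∀ i, IsEC M.act M.P (R i) (B i))
    (hdisj : ∀ i j, i ≠ j → Disjoint (R i) (R j))
    (T : Finset S)
    (Mc : MDP (CSv R) (CA A n))
    (Hact : ∀ x, Mc.act x = cAct M R B x)
    (HP : ∀ x a y, Mc.P x a y = cP M R T x a y)
    (v : S → ℝ) (hv : IsValue M.act M.act_ne M.P T v)
    (w₁ : CSv R → ℝ)
    (hw₁ : IsValue Mc.act Mc.act_ne Mc.P (T.image (collapseV R)) w₁)
    (w₂ : CSv R → ℝ)
    (hw₂ : IsValue Mc.act Mc.act_ne Mc.P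
      (insert (term R true) ((T \ Finset.univ.biUnion R).image (collapseV R))) w₂) :
    ∀ s : S, v s = w₁ (collapseV R s) ∧ v s = w₂ (collapseV R s) := by
  have hval_left : ∀ t : S, ∃ u, (collapseV R t).1 = Sum.inl u := by
    intro t
    rcases collapseV_val R hdisj t with ⟨_, hv1⟩ | ⟨i, _, hv1⟩
    · exact ⟨_, hv1⟩
    · exact ⟨_, hv1⟩
  -- First target: collapsed(T)
  have e1 : ∀ s, v s = w₁ (collapseV R s) := by
    apply master M R B hEC hdisj T Mc Hact HP v hv (T.image (collapseV R)) w₁ hw₁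
    · intro s hs
      constructor
      · intro hmem
        obtain ⟨t, htT, hte⟩ := Finset.mem_image.1 hmem
        have h' := congrArg Subtype.val hte
        rcases collapseV_val R hdisj t with ⟨_, hv1⟩ | ⟨j, _, hv1⟩
        · rw [hv1, collapseV_eq_inl hs] at h'
          simp only [Sum.inl.injEq] at h'
          rwa [← h']
        · rw [hv1, collapseV_eq_inl hs] at h'
          simp at h'
      · intro hsT
        exact Finset.mem_image_of_mem _ hsT
    · rintro i ⟨t, ht⟩
      have htR := (Finset.mem_inter.1 ht).1
      have htT := (Finset.mem_inter.1 ht).2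
      have hmem : repV R i ∈ T.image (collapseV R) := by
        rw [← collapseV_eq_rep hdisj htR]
        exact Finset.mem_image_of_mem _ htT
      rw [hw₁.2.1 (repV R i), if_pos hmem]
    · intro i hT hmem
      obtain ⟨t, htT, hte⟩ := Finset.mem_image.1 hmem
      have h' := congrArg Subtype.val hte
      rcases collapseV_val R hdisj t with ⟨_, hv1⟩ | ⟨j, hj, hv1⟩
      · rw [hv1] at h'
        simp [repV] at h'
      · rw [hv1] at h'
        simp only [repV, Sum.inl.injEq, Sum.inr.injEq] at h'
        subst h'
        exact hT ⟨t, Finset.mem_inter.2 ⟨hj, htT⟩⟩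
    · intro hmem
      obtain ⟨t, _, hte⟩ := Finset.mem_image.1 hmem
      obtain ⟨u, hu⟩ := hval_left t
      have h' := congrArg Subtype.val hte
      rw [hu] at h'
      simp [term] at h'
  -- Second target: {s₊} ∪ (T ∩ S^c)
  set Tc₂ : Finset (CSv R) :=
    insert (term R true) ((T \ Finset.univ.biUnion R).image (collapseV R)) with hTc₂
  have hrep_not₂ : ∀ i, repV R i ∉ Tc₂ := by
    intro i hmem
    rcases Finset.mem_insert.1 hmem with h | h
    · have h' := congrArg Subtype.val h
      simp [repV, term] at h'
    · obtain ⟨t, htmem, hte⟩ := Finset.mem_image.1 h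
      have htnR : ∀ j, t ∉ R j := fun j hj =>
        (Finset.mem_sdiff.1 htmem).2 (Finset.mem_biUnion.2 ⟨j, Finset.mem_univ j, hj⟩)
      have h' := congrArg Subtype.val hte
      rw [collapseV_eq_inl htnR] at h'
      simp [repV] at h'
  have htrue_mem : term R true ∈ Tc₂ := Finset.mem_insert_self _ _
  have hw2_true : w₂ (term R true) = 1 := by rw [hw₂.2.1, if_pos htrue_mem]
  have H2₂ : ∀ i, (R i ∩ T).Nonempty → w₂ (repV R i) = 1 := by
    intro i hT
    have heq := hw₂.2.1 (repV R i)
    rw [if_neg (hrep_not₂ i)] at heq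
    apply le_antisymm (hw₂.1 _).2
    rw [heq]
    have hmem : (Sum.inl (Sum.inr i) : CA A n) ∈ Mc.act (repV R i) := by
      rw [Hact, cAct_rep]
      exact Finset.mem_insert_self _ _
    refine le_trans (le_of_eq ?_)
      (Finset.le_sup' (fun α => ∑ y, Mc.P (repV R i) α y * w₂ y) hmem)
    have heval : ∑ y, Mc.P (repV R i) (Sum.inl (Sum.inr i)) y * w₂ y
        = w₂ (term R true) := by
      rw [Finset.sum_congr rfl fun y _ => by rw [HP, cP_rem, if_pos hT], sum_delta]
    rw [heval, hw2_true]
  have e2 : ∀ s, v s = w₂ (collapseV R s) := by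
    apply master M R B hEC hdisj T Mc Hact HP v hv Tc₂ w₂ hw₂ _ H2₂
      (fun i _ => hrep_not₂ i)
    · intro hmem
      rcases Finset.mem_insert.1 hmem with h | h
      · have h' := congrArg Subtype.val h
        simp [term] at h'
      · obtain ⟨t, _, hte⟩ := Finset.mem_image.1 h
        obtain ⟨u, hu⟩ := hval_left t
        have h' := congrArg Subtype.val hte
        rw [hu] at h'
        simp [term] at h'
    · intro s hs
      have hsb : s ∉ Finset.univ.biUnion R := by
        intro hb
        obtain ⟨j, _, hj⟩ := Finset.mem_biUnion.1 hb
        exact hs j hj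
      constructor
      · intro hmem
        rcases Finset.mem_insert.1 hmem with h | h
        · have h' := congrArg Subtype.val h
          rw [collapseV_eq_inl hs] at h'
          simp [term] at h'
        · obtain ⟨t, htmem, hte⟩ := Finset.mem_image.1 h
          have htnR : ∀ j, t ∉ R j := fun j hj =>
            (Finset.mem_sdiff.1 htmem).2 (Finset.mem_biUnion.2 ⟨j, Finset.mem_univ j, hj⟩)
          have h' := congrArg Subtype.val hte
          rw [collapseV_eq_inl htnR, collapseV_eq_inl hs] at h'
          simp only [Sum.inl.injEq] at h'
          rw [← h']
          exact (Finset.mem_sdiff.1 htmem).1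
      · intro hsT
        exact Finset.mem_insert_of_mem
          (Finset.mem_image_of_mem _ (Finset.mem_sdiff.2 ⟨hsT, hsb⟩))
  intro s
  exact ⟨e1 s, e2 s⟩
end
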